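/- arXiv:2112.06664 — 4 statements merged into one kernel-verified Lean document; each statement's English description precedes it below -/
import Mathlib

section
/- For every τ > 0, every n ∈ ℕ, every φ ∈ Φ, and every bounded nondecreasing right-continuous function v : [0,τ] → ℝ that is not constant on [0,τ], one has I_{n,φ}(τ,v) · E_n(A) ≤ (v(τ) − v(0)) · ω_φ(A, τ/λ_n), where I_{n,φ}(τ,v) := inf_{k ∈ ℕ, k ≥ n} ∫_{[0,τ]} φ(λ_k t / λ_n) dv(t) (the integral taken with respect to the Lebesgue–Stieltjes measure of v). Equivalently, E_n(A) ≤ K_{n,φ}(τ) · ω_φ(A, τ/λ_n) with K_{n,φ}(τ) := inf over all such v of (v(τ) − v(0))/I_{n,φ}(τ,v) (the ratio interpreted as +∞ when I_{n,φ}(τ,v) = 0). -/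
open MeasureTheory Real Filter Finset intervalIntegral
open scoped ENNReal Topology

noncomputable section

/-- `M` is an Orlicz function: nondecreasing and convex on `[0,∞)`, `M 0 = 0`,
and `M t → ∞` as `t → ∞`. -/
def IsOrlicz (M : ℝ → ℝ) : Prop :=
  MonotoneOn M (Set.Ici 0) ∧ ConvexOn ℝ (Set.Ici 0) M ∧ M 0 = 0 ∧
    Filter.Tendsto M Filter.atTop Filter.atTop

/-- The Legendre conjugate `M*(v) = sup {uv - M u : u ≥ 0}`, valued in `[0,∞]`. -/
def Mstar (M : ℝ → ℝ) (v : ℝ) : ℝ≥0∞ :=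
  ⨆ (u : ℝ) (_ : 0 ≤ u), ENNReal.ofReal (u * v - M u)

/-- The set `Γ` of positive sequences `γ` with `Σ_k M_k^*(γ_k) ≤ 1`. -/
def GammaSet (M : ℤ → ℝ → ℝ) : Set (ℤ → ℝ) :=
  {γ | (∀ k, 0 < γ k) ∧ ∑' k : ℤ, Mstar (M k) (γ k) ≤ 1}

/-- The Orlicz norm `‖A‖_M = sup_{γ ∈ Γ} Σ_k γ_k |A_k|` of a sequence of
Fourier coefficients, valued in `[0,∞]`. -/
def orliczNorm (M : ℤ → ℝ → ℝ) (A : ℤ → ℂ) : ℝ≥0∞ :=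
  ⨆ γ ∈ GammaSet M, ∑' k : ℤ, ENNReal.ofReal (γ k * ‖A k‖)

/-- The best approximation `E_n(A) = sup_{γ ∈ Γ} Σ_{|k| ≥ n} γ_k |A_k|`. -/
def bestE (M : ℤ → ℝ → ℝ) (A : ℤ → ℂ) (n : ℕ) : ℝ≥0∞ :=
  ⨆ γ ∈ GammaSet M, ∑' k : ℤ,
    if (n : ℤ) ≤ |k| then ENNReal.ofReal (γ k * ‖A k‖) else 0

/-- The generalized modulus of smoothness
`ω_φ(A, δ) = sup_{|h| ≤ δ} sup_{γ ∈ Γ} Σ_k γ_k φ(λ_k h) |A_k|`. -/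
def genMod (Λ : ℤ → ℝ) (M : ℤ → ℝ → ℝ) (A : ℤ → ℂ) (φ : ℝ → ℝ) (δ : ℝ) : ℝ≥0∞ :=
  ⨆ (h : ℝ) (_ : |h| ≤ δ), ⨆ γ ∈ GammaSet M, ∑' k : ℤ,
    ENNReal.ofReal (γ k * φ (Λ k * h) * ‖A k‖)

/-- The class `Φ`: continuous bounded nonnegative even functions vanishing at `0`
whose zero set has Lebesgue measure zero. -/
def IsPhi (φ : ℝ → ℝ) : Prop :=
  Continuous φ ∧ (∃ C, ∀ t, φ t ≤ C) ∧ (∀ t, 0 ≤ φ t) ∧ φ 0 = 0 ∧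
    (∀ t, φ (-t) = φ t) ∧ MeasureTheory.volume {t : ℝ | φ t = 0} = 0

/-- A symmetric sequence of Fourier exponents: `λ_0 = 0`, `λ_{-k} = -λ_k`,
and `0 < λ_k < λ_{k+1}` for `k ≥ 1`. -/
def IsExponents (Λ : ℤ → ℝ) : Prop :=
  Λ 0 = 0 ∧ (∀ k, Λ (-k) = -Λ k) ∧ (∀ k : ℤ, 1 ≤ k → 0 < Λ k) ∧
    (∀ k : ℤ, 1 ≤ k → Λ k < Λ (k + 1))

/-- `φ_α(t) = 2^{α/2} (1 - cos t)^{α/2}`, so that `ω_{φ_α} = ω_α`. -/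
def phiAlpha (α : ℝ) (t : ℝ) : ℝ := 2 ^ (α / 2) * (1 - Real.cos t) ^ (α / 2)

/-- `sinc t = sin t / t` for `t ≠ 0`, `sinc 0 = 1`. -/
def sincFn (t : ℝ) : ℝ := if t = 0 then 1 else Real.sin t / t

/-- `φ̃_m(t) = (1 - sinc t)^m`, so that `ω_{φ̃_m} = ω̃_m`. -/
def phiTilde (m : ℕ) (t : ℝ) : ℝ := (1 - sincFn t) ^ m

/-!
Fix `γ ∈ Γ`. For `|k| ≥ n` the integral `∫_{[0,τ]} φ(λ_k t/λ_n) dv` is at least `I_{n,φ}(τ,v)`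
(for negative `k` by evenness of `φ`), so
`I · Σ_{|k|≥n} γ_k |A_k| ≤ ∫_{(0,τ]} Σ_k γ_k φ(λ_k t/λ_n) |A_k| dv(t)`.
For `t ∈ (0,τ]` the integrand is bounded by `ω_φ(A, τ/λ_n)` (take `h = t/λ_n`),
and `v((0,τ]) = v(τ) - v(0)`. The point `t = 0` is harmless since `φ(0) = 0`.
-/

lemma IsExponents.nonneg_natCast {Λ : ℤ → ℝ} (hΛ : IsExponents Λ) (n : ℕ) : 0 ≤ Λ n := by
  rcases Nat.eq_zero_or_pos n with rfl | hn
  · exact hΛ.1.ge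
  · exact (hΛ.2.2.1 n (by exact_mod_cast hn)).le

lemma IsExponents.apply_natAbs_mul_of_even {Λ : ℤ → ℝ} (hΛ : IsExponents Λ) {φ : ℝ → ℝ}
    (hφ : ∀ t, φ (-t) = φ t) (k : ℤ) (x : ℝ) : φ (Λ k.natAbs * x) = φ (Λ k * x) := by
  rcases Int.natAbs_eq k with hk | hk <;> conv_rhs => rw [hk]
  rw [hΛ.2.1, neg_mul, hφ]

lemma setLIntegral_Icc_le_Ioc_of_apply_left_eq_zero {μ : Measure ℝ} {f : ℝ → ℝ≥0∞} {a b : ℝ}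
    (ha : f a = 0) : ∫⁻ t in Set.Icc a b, f t ∂μ ≤ ∫⁻ t in Set.Ioc a b, f t ∂μ := by
  have hsub : Set.Icc a b ⊆ insert a (Set.Ioc a b) := fun t ⟨hat, htb⟩ =>
    hat.eq_or_lt.elim (fun h => Or.inl h.symm) fun h => Or.inr ⟨h, htb⟩
  calc ∫⁻ t in Set.Icc a b, f t ∂μ ≤ ∫⁻ t in insert a (Set.Ioc a b), f t ∂μ :=
        lintegral_mono_set hsub
    _ = ∫⁻ t in Set.Ioc a b, f t ∂μ := by
        rw [lintegral_insert Set.left_notMem_Ioc, ha, zero_mul, zero_add]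

lemma mul_tsum_le_mul_measure_of_le_setLIntegral {α ι : Type*} [MeasurableSpace α] [Countable ι]
    {μ : Measure α} {s : Set α} {I c : ℝ≥0∞} {a : ι → ℝ≥0∞} {g : ι → α → ℝ≥0∞}
    (hg : ∀ i, Measurable (g i)) (hI : ∀ i, a i ≠ 0 → I ≤ ∫⁻ t in s, g i t ∂μ)
    (hc : ∀ t ∈ s, ∑' i, a i * g i t ≤ c) : I * ∑' i, a i ≤ c * μ s :=
  calc I * ∑' i, a i = ∑' i, a i * I := by
        rw [← ENNReal.tsum_mul_left]; simp_rw [mul_comm]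
    _ ≤ ∑' i, a i * ∫⁻ t in s, g i t ∂μ := ENNReal.tsum_le_tsum fun i => by
        rcases eq_or_ne (a i) 0 with h | h
        · simp [h]
        · exact mul_le_mul_right (hI i h) _
    _ = ∫⁻ t in s, ∑' i, a i * g i t ∂μ := by
        rw [lintegral_tsum fun i => ((hg i).const_mul _).aemeasurable]
        simp_rw [lintegral_const_mul _ (hg _)]
    _ ≤ ∫⁻ _ in s, c ∂μ := setLIntegral_mono measurable_const hc
    _ = c * μ s := setLIntegral_const s c

lemma tsum_le_genMod {Λ : ℤ → ℝ} {M : ℤ → ℝ → ℝ} {A : ℤ → ℂ} {φ : ℝ → ℝ} {γ : ℤ → ℝ}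
    (hγ : γ ∈ GammaSet M) {h δ : ℝ} (hh : |h| ≤ δ) :
    ∑' k, ENNReal.ofReal (γ k * φ (Λ k * h) * ‖A k‖) ≤ genMod Λ M A φ δ :=
  le_iSup₂_of_le h hh (le_iSup₂_of_le γ hγ le_rfl)

lemma IsExponents.iInf_setLIntegral_Icc_le_setLIntegral_Ioc {Λ : ℤ → ℝ} (hΛ : IsExponents Λ)
    {φ : ℝ → ℝ} (hφ0 : φ 0 = 0) (hφeven : ∀ t, φ (-t) = φ t) (μ : Measure ℝ) (τ : ℝ) {n : ℕ}
    {k : ℤ} (hk : (n : ℤ) ≤ |k|) :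
    ⨅ (m : ℕ) (_ : n ≤ m), ∫⁻ t in Set.Icc (0 : ℝ) τ, ENNReal.ofReal (φ (Λ m * t / Λ n)) ∂μ
      ≤ ∫⁻ t in Set.Ioc (0 : ℝ) τ, ENNReal.ofReal (φ (Λ k * t / Λ n)) ∂μ := by
  have hnk : n ≤ k.natAbs := by rwa [Int.abs_eq_natAbs, Nat.cast_le] at hk
  refine (iInf₂_le k.natAbs hnk).trans (le_of_eq_of_le ?_
    (setLIntegral_Icc_le_Ioc_of_apply_left_eq_zero (by simp [hφ0])))
  simp_rw [mul_div_assoc, hΛ.apply_natAbs_mul_of_even hφeven]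

lemma tsum_ite_mul_le_genMod {Λ : ℤ → ℝ} {M : ℤ → ℝ → ℝ} {A : ℤ → ℂ} {φ : ℝ → ℝ}
    {γ : ℤ → ℝ} (hγ : γ ∈ GammaSet M) {n : ℕ} (hΛn : 0 ≤ Λ n) {t τ : ℝ} (ht₀ : 0 ≤ t)
    (htτ : t ≤ τ) :
    ∑' k, (if (n : ℤ) ≤ |k| then ENNReal.ofReal (γ k * ‖A k‖) else 0)
        * ENNReal.ofReal (φ (Λ k * t / Λ n))
      ≤ genMod Λ M A φ (τ / Λ n) := by
  have hh : |t / Λ n| ≤ τ / Λ n := by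
    rw [abs_of_nonneg (div_nonneg ht₀ hΛn)]
    exact div_le_div_of_nonneg_right htτ hΛn
  refine le_trans (ENNReal.tsum_le_tsum fun k => ?_) (tsum_le_genMod hγ hh)
  split_ifs
  · rw [← ENNReal.ofReal_mul (mul_nonneg (hγ.1 k).le (norm_nonneg _)), mul_div_assoc,
      mul_right_comm]
  · exact (zero_mul _).trans_le zero_le

theorem direct_theorem_stieltjes_general
    (Λ : ℤ → ℝ) (M : ℤ → ℝ → ℝ) (A : ℤ → ℂ)
    (hΛ : IsExponents Λ)
    (τ : ℝ) (n : ℕ) (φ : ℝ → ℝ) (hφ : IsPhi φ)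
    (v : StieltjesFunction ℝ) :
    (⨅ (k : ℕ) (_ : n ≤ k),
        ∫⁻ t in Set.Icc (0 : ℝ) τ, ENNReal.ofReal (φ (Λ k * t / Λ n)) ∂v.measure)
        * bestE M A n
      ≤ ENNReal.ofReal (v τ - v 0) * genMod Λ M A φ (τ / Λ n) := by
  obtain ⟨hφc, -, -, hφ0, hφeven, -⟩ := hφ
  rw [← v.measure_Ioc, mul_comm (v.measure _), bestE]
  simp_rw [ENNReal.mul_iSup]
  refine iSup₂_le fun γ hγ => mul_tsum_le_mul_measure_of_le_setLIntegral
    (g := fun k t => ENNReal.ofReal (φ (Λ k * t / Λ n)))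
    (fun k => (hφc.measurable.comp (by fun_prop)).ennreal_ofReal) (fun k hk => ?_)
    fun t ht => tsum_ite_mul_le_genMod hγ (hΛ.nonneg_natCast n) ht.1.le ht.2
  refine hΛ.iInf_setLIntegral_Icc_le_setLIntegral_Ioc hφ0 hφeven v.measure τ ?_
  by_contra h
  exact hk (if_neg h)

/-- **Theorem 1 (direct theorem, sharp form).** For every `τ > 0`, `n ∈ ℕ`, `φ ∈ Φ` and
every bounded nondecreasing right-continuous `v` that is not constant on `[0,τ]`
(equivalently, `v 0 < v τ`), one has
`I_{n,φ}(τ,v) · E_n(A) ≤ (v τ - v 0) · ω_φ(A, τ/λ_n)`. -/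
theorem direct_theorem_stieltjes
    (Λ : ℤ → ℝ) (M : ℤ → ℝ → ℝ) (A : ℤ → ℂ)
    (hΛ : IsExponents Λ) (hM : ∀ k, IsOrlicz (M k)) (hA : orliczNorm M A ≠ ⊤)
    (τ : ℝ) (hτ : 0 < τ) (n : ℕ) (hn : 1 ≤ n) (φ : ℝ → ℝ) (hφ : IsPhi φ)
    (v : StieltjesFunction ℝ) (hvnc : v 0 < v τ) :
    (⨅ (k : ℕ) (_ : n ≤ k),
        ∫⁻ t in Set.Icc (0 : ℝ) τ, ENNReal.ofReal (φ (Λ k * t / Λ n)) ∂v.measure)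
        * bestE M A n
      ≤ ENNReal.ofReal (v τ - v 0) * genMod Λ M A φ (τ / Λ n) :=
  direct_theorem_stieltjes_general Λ M A hΛ τ n φ hφ v
end
end

section
/- Fix n ∈ ℕ and suppose A_k = 0 for every k ∈ ℤ with k ∉ {−n, 0, n}. Then for every α > 0 one has the exact equality E_n(A) = ((α/2 + 1)/2^{α+1}) · ∫_0^π ω_α(A, t/λ_n) sin t dt. In particular the constant (α/2+1)/2^{α+1} in the Jackson-type inequality E_n(A) ≤ ((α/2+1)/2^{α+1})·∫_0^π ω_α(A, t/λ_n) sin t dt cannot be improved. -/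
open MeasureTheory Real Filter Finset intervalIntegral
open scoped ENNReal Topology

/-!
Since `A` lives on `{-n, 0, n}` and `φ_α` is even and vanishes at `0`, every term of the modulus
is `φ_α(λ_n h)` times the corresponding term of `E_n(A)`, so
`ω_α(A, δ) = sup_{|h| ≤ δ} φ_α(λ_n h) · E_n(A)`. For `δ = t / λ_n` with `t ∈ [0, π]` this is
`φ_α(t) · E_n(A)`, as `1 - cos` increases on `[0, π]`. Finally, `(1 - cos t)^{α/2 + 1}` is an
antiderivative of `φ_α(t) sin t` up to a constant, whence
`∫_0^π φ_α(t) sin t dt = 2^{α+1}/(α/2 + 1)`.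
-/

noncomputable section

lemma phiAlpha_nonneg (α t : ℝ) : 0 ≤ phiAlpha α t :=
  mul_nonneg (by positivity) (rpow_nonneg (sub_nonneg.2 (cos_le_one t)) _)

lemma phiAlpha_zero {α : ℝ} (hα : 0 < α) : phiAlpha α 0 = 0 := by
  simp [phiAlpha, zero_rpow (half_pos hα).ne']

lemma phiAlpha_neg (α t : ℝ) : phiAlpha α (-t) = phiAlpha α t := by
  rw [phiAlpha, phiAlpha, cos_neg]

lemma phiAlpha_le_of_abs_le {α u t : ℝ} (hα : 0 ≤ α) (hu : |u| ≤ t) (ht : t ≤ π) :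
    phiAlpha α u ≤ phiAlpha α t := by
  have hcos : cos t ≤ cos u := by
    rw [← cos_abs u]
    exact cos_le_cos_of_nonneg_of_le_pi (abs_nonneg u) ht hu
  unfold phiAlpha
  gcongr
  exact sub_nonneg.2 (cos_le_one u)

lemma continuous_phiAlpha {α : ℝ} (hα : 0 ≤ α) : Continuous (phiAlpha α) :=
  continuous_const.mul <|
    (continuous_const.sub continuous_cos).rpow_const fun _ => Or.inr (by linarith)

lemma integral_phiAlpha_mul_sin {α : ℝ} (hα : 0 ≤ α) :
    ∫ t in (0 : ℝ)..π, phiAlpha α t * sin t = 2 ^ (α + 1) / (α / 2 + 1) := by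
  have hderiv : ∀ t ∈ Set.uIcc 0 π,
      HasDerivAt (fun t => 2 ^ (α / 2) / (α / 2 + 1) * (1 - cos t) ^ (α / 2 + 1))
        (phiAlpha α t * sin t) t := by
    intro t _
    have h := (((hasDerivAt_cos t).const_sub 1).rpow_const
      (p := α / 2 + 1) (Or.inr (by linarith))).const_mul (2 ^ (α / 2) / (α / 2 + 1))
    refine h.congr_deriv ?_
    rw [phiAlpha, add_sub_cancel_right]
    field_simp
  rw [integral_eq_sub_of_hasDerivAt hderiv
    (((continuous_phiAlpha hα).mul continuous_sin).intervalIntegrable _ _)]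
  simp only [cos_pi, cos_zero, sub_self, zero_rpow (by linarith : α / 2 + 1 ≠ 0), mul_zero,
    sub_zero, sub_neg_eq_add]
  rw [show (1 : ℝ) + 1 = 2 by norm_num, div_mul_eq_mul_div, ← rpow_add two_pos]
  ring_nf

lemma iSup_ofReal_phiAlpha {α c t : ℝ} (hα : 0 ≤ α) (hc : 0 < c) (ht : 0 ≤ t)
    (htπ : t ≤ π) :
    ⨆ (h : ℝ) (_ : |h| ≤ t / c), ENNReal.ofReal (phiAlpha α (c * h))
      = ENNReal.ofReal (phiAlpha α t) := by
  refine le_antisymm (iSup₂_le fun h hh => ENNReal.ofReal_le_ofReal ?_) ?_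
  · refine phiAlpha_le_of_abs_le hα ?_ htπ
    rw [abs_mul, abs_of_pos hc]
    exact (le_div_iff₀' hc).1 hh
  · refine le_iSup₂_of_le (t / c) (abs_of_nonneg (div_nonneg ht hc.le)).le ?_
    rw [mul_div_cancel₀ t hc.ne']

section ThreePointSupport

variable {Λ : ℤ → ℝ} {M : ℤ → ℝ → ℝ} {A : ℤ → ℂ} {n : ℕ} {φ : ℝ → ℝ}

lemma ofReal_mul_phi_eq_mul_ite (hΛ0 : Λ 0 = 0) (hΛneg : ∀ k, Λ (-k) = -Λ k)
    (hsupp : ∀ k : ℤ, k ≠ -(n : ℤ) → k ≠ 0 → k ≠ (n : ℤ) → A k = 0)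
    (hφ0 : φ 0 = 0) (hφneg : ∀ t, φ (-t) = φ t) (hφ : ∀ t, 0 ≤ φ t)
    (γ : ℤ → ℝ) (h : ℝ) (k : ℤ) :
    ENNReal.ofReal (γ k * φ (Λ k * h) * ‖A k‖)
      = ENNReal.ofReal (φ (Λ n * h)) *
          if (n : ℤ) ≤ |k| then ENNReal.ofReal (γ k * ‖A k‖) else 0 := by
  have factor : φ (Λ k * h) = φ (Λ n * h) → (n : ℤ) ≤ |k| →
      ENNReal.ofReal (γ k * φ (Λ k * h) * ‖A k‖)
        = ENNReal.ofReal (φ (Λ n * h)) *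
          if (n : ℤ) ≤ |k| then ENNReal.ofReal (γ k * ‖A k‖) else 0 := by
    intro hφk hk
    rw [if_pos hk, ← ENNReal.ofReal_mul (hφ _), hφk]
    ring_nf
  by_cases hkn : k = n
  · exact factor (by rw [hkn]) (by rw [hkn, Nat.abs_cast])
  by_cases hkn' : k = -n
  · exact factor (by rw [hkn', hΛneg, neg_mul, hφneg]) (by rw [hkn', abs_neg, Nat.abs_cast])
  by_cases hk0 : k = 0
  · subst hk0
    have hn0 : ¬ (n : ℤ) ≤ |0| := by simpa using Ne.symm hkn
    rw [if_neg hn0, mul_zero, hΛ0, zero_mul, hφ0, mul_zero, zero_mul, ENNReal.ofReal_zero]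
  · simp [hsupp k hkn' hk0 hkn]

lemma iSup_tsum_ofReal_mul_phi_eq_mul_bestE (hΛ0 : Λ 0 = 0) (hΛneg : ∀ k, Λ (-k) = -Λ k)
    (hsupp : ∀ k : ℤ, k ≠ -(n : ℤ) → k ≠ 0 → k ≠ (n : ℤ) → A k = 0)
    (hφ0 : φ 0 = 0) (hφneg : ∀ t, φ (-t) = φ t) (hφ : ∀ t, 0 ≤ φ t) (h : ℝ) :
    ⨆ γ ∈ GammaSet M, ∑' k : ℤ, ENNReal.ofReal (γ k * φ (Λ k * h) * ‖A k‖)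
      = ENNReal.ofReal (φ (Λ n * h)) * bestE M A n := by
  simp only [ofReal_mul_phi_eq_mul_ite hΛ0 hΛneg hsupp hφ0 hφneg hφ, ENNReal.tsum_mul_left,
    bestE, ENNReal.mul_iSup]

lemma genMod_eq_iSup_mul_bestE (hΛ0 : Λ 0 = 0) (hΛneg : ∀ k, Λ (-k) = -Λ k)
    (hsupp : ∀ k : ℤ, k ≠ -(n : ℤ) → k ≠ 0 → k ≠ (n : ℤ) → A k = 0)
    (hφ0 : φ 0 = 0) (hφneg : ∀ t, φ (-t) = φ t) (hφ : ∀ t, 0 ≤ φ t) (δ : ℝ) :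
    genMod Λ M A φ δ
      = (⨆ (h : ℝ) (_ : |h| ≤ δ), ENNReal.ofReal (φ (Λ n * h))) * bestE M A n := by
  simp only [genMod, iSup_tsum_ofReal_mul_phi_eq_mul_bestE hΛ0 hΛneg hsupp hφ0 hφneg hφ,
    ENNReal.iSup_mul]

end ThreePointSupport

theorem jackson_sin_weight_sharp_general
    (Λ : ℤ → ℝ) (M : ℤ → ℝ → ℝ) (A : ℤ → ℂ)
    (hΛ : IsExponents Λ)
    (n : ℕ) (hn : 1 ≤ n)
    (hsupp : ∀ k : ℤ, k ≠ -(n : ℤ) → k ≠ 0 → k ≠ (n : ℤ) → A k = 0)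
    (α : ℝ) (hα : 0 < α) :
    (bestE M A n).toReal
      = ((α / 2 + 1) / 2 ^ (α + 1)) *
          ∫ t in (0 : ℝ)..π, (genMod Λ M A (phiAlpha α) (t / Λ n)).toReal * Real.sin t := by
  obtain ⟨hΛ0, hΛneg, hΛpos, -⟩ := hΛ
  have hΛn : 0 < Λ n := hΛpos n (by exact_mod_cast hn)
  have hmod : ∀ t ∈ Set.uIcc 0 π, (genMod Λ M A (phiAlpha α) (t / Λ n)).toReal * sin t
      = (bestE M A n).toReal * (phiAlpha α t * sin t) := by
    intro t ht
    rw [Set.uIcc_of_le pi_pos.le] at ht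
    rw [genMod_eq_iSup_mul_bestE hΛ0 hΛneg hsupp (phiAlpha_zero hα) (phiAlpha_neg α)
      (phiAlpha_nonneg α), iSup_ofReal_phiAlpha hα.le hΛn ht.1 ht.2, ENNReal.toReal_mul,
      ENNReal.toReal_ofReal (phiAlpha_nonneg α t)]
    ring
  rw [integral_congr hmod, intervalIntegral.integral_const_mul, integral_phiAlpha_mul_sin hα.le]
  field_simp

/-- **Sharpness of Corollary 1.** If the coefficient sequence `A` is supported on
`{-n, 0, n}`, then for every `α > 0` the exact equality
`E_n(A) = ((α/2 + 1)/2^{α+1}) · ∫_0^π ω_α(A, t/λ_n) sin t dt` holds. -/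
theorem jackson_sin_weight_sharp
    (Λ : ℤ → ℝ) (M : ℤ → ℝ → ℝ) (A : ℤ → ℂ)
    (hΛ : IsExponents Λ) (hM : ∀ k, IsOrlicz (M k)) (hA : orliczNorm M A ≠ ⊤)
    (n : ℕ) (hn : 1 ≤ n)
    (hsupp : ∀ k : ℤ, k ≠ -(n : ℤ) → k ≠ 0 → k ≠ (n : ℤ) → A k = 0)
    (α : ℝ) (hα : 0 < α) :
    (bestE M A n).toReal
      = ((α / 2 + 1) / 2 ^ (α + 1)) *
          ∫ t in (0 : ℝ)..π, (genMod Λ M A (phiAlpha α) (t / Λ n)).toReal * Real.sin t :=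
  jackson_sin_weight_sharp_general Λ M A hΛ n hn hsupp α hα

end
end

section
/- (Inverse approximation theorem.) Let τ > 0 and let φ ∈ Φ be nondecreasing on [0,τ] with φ(τ) = sup{φ(t) : t ∈ ℝ}. Assume moreover that E_N(A) → 0 as N → ∞. Then for every n ∈ ℕ: ω_φ(A, τ/λ_n) ≤ Σ_{ν=1}^{n} ( φ(τλ_ν/λ_n) − φ(τλ_{ν−1}/λ_n) ) · E_ν(A), where λ_0 = 0. -/
open MeasureTheory Real Filter Finset intervalIntegral
open scoped ENNReal Topology

noncomputable section

/-!
Fix `h` with `|h| ≤ τ / λ_n` and `γ ∈ Γ`. Put `b_j = φ(τ λ_j / λ_n)`, nondecreasing in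
`0 ≤ j ≤ n` with `b_0 = 0` and `b_n = max φ`, so that `φ(λ_k h) ≤ b_{min(n,|k|)}` for every `k`.
Telescoping, `b_{min(n,|k|)} = Σ_{1 ≤ ν ≤ min(n,|k|)} (b_ν - b_{ν-1})`; summing over `k` and
exchanging the sums gives `Σ_k γ_k φ(λ_k h) |A_k| ≤ Σ_{ν=1}^n (b_ν - b_{ν-1}) Σ_{|k| ≥ ν} γ_k |A_k|`,
and each inner sum is at most `E_ν(A)`.
-/

namespace IsExponents

variable {Λ : ℤ → ℝ}

theorem strictMonoOn (hΛ : IsExponents Λ) : StrictMonoOn Λ (Set.Ici 0) := by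
  obtain ⟨hΛ0, -, hΛpos, hΛstrict⟩ := hΛ
  refine strictMonoOn_of_lt_add_one Set.ordConnected_Ici fun k _ hk _ => ?_
  rcases (Set.mem_Ici.mp hk).eq_or_lt with rfl | hk
  · simpa [hΛ0] using hΛpos 1 le_rfl
  · exact hΛstrict k hk

theorem pos (hΛ : IsExponents Λ) {k : ℤ} (hk : 1 ≤ k) : 0 < Λ k := hΛ.2.2.1 k hk

theorem nonneg (hΛ : IsExponents Λ) {k : ℤ} (hk : 0 ≤ k) : 0 ≤ Λ k :=
  hΛ.1 ▸ hΛ.strictMonoOn.monotoneOn (Set.mem_Ici.mpr le_rfl) hk hk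

theorem abs_apply (hΛ : IsExponents Λ) (k : ℤ) : |Λ k| = Λ |k| := by
  rcases le_total 0 k with hk | hk
  · rw [abs_of_nonneg hk, abs_of_nonneg (hΛ.nonneg hk)]
  · have hneg : Λ k ≤ 0 := by simpa [hΛ.2.1] using hΛ.nonneg (neg_nonneg.mpr hk)
    rw [abs_of_nonpos hk, hΛ.2.1, abs_of_nonpos hneg]

end IsExponents

theorem sum_Icc_sub_sub_one (b : ℤ → ℝ) (m : ℕ) :
    ∑ ν ∈ Icc 1 m, (b ν - b (ν - 1)) = b m - b 0 := by
  induction m with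
  | zero => simp
  | succ m ih =>
    rw [sum_Icc_succ_top (by omega), ih, Nat.cast_succ, add_sub_cancel_right]
    ring

/-- Abel summation against the indicators of `{ν ≤ j}`. -/
theorem ofReal_sub_mul_eq_sum_Icc_ite (b : ℤ → ℝ) {n : ℕ} (hb : MonotoneOn b (Set.Icc 0 n))
    {j : ℤ} (hj : 0 ≤ j) (c : ℝ≥0∞) :
    ENNReal.ofReal (b (min n j) - b 0) * c =
      ∑ ν ∈ Icc 1 n, ENNReal.ofReal (b ν - b (ν - 1)) * if (ν : ℤ) ≤ j then c else 0 := by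
  obtain ⟨m, rfl⟩ := Int.eq_ofNat_of_zero_le hj
  have hfilter : (Icc 1 n).filter (fun ν : ℕ => (ν : ℤ) ≤ m) = (Icc 1 (min n m) : Finset ℕ) := by
    ext ν
    simp only [mem_filter, mem_Icc]
    omega
  have hincr : ∀ ν ∈ Icc 1 (min n m), 0 ≤ b ν - b (ν - 1) := by
    intro ν hν
    rw [mem_Icc] at hν
    refine sub_nonneg.mpr (hb ⟨?_, ?_⟩ ⟨?_, ?_⟩ ?_) <;> omega
  simp_rw [mul_ite, mul_zero]
  rw [← sum_filter, hfilter, ← sum_mul, ← ENNReal.ofReal_sum_of_nonneg hincr,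
    sum_Icc_sub_sub_one]
  push_cast
  rfl

theorem tsum_ite_le_bestE (M : ℤ → ℝ → ℝ) (A : ℤ → ℂ) {γ : ℤ → ℝ} (hγ : γ ∈ GammaSet M)
    (ν : ℕ) :
    ∑' k, (if (ν : ℤ) ≤ |k| then ENNReal.ofReal (γ k * ‖A k‖) else 0) ≤ bestE M A ν :=
  le_iSup₂ (f := fun γ (_ : γ ∈ GammaSet M) =>
    ∑' k, if (ν : ℤ) ≤ |k| then ENNReal.ofReal (γ k * ‖A k‖) else 0) γ hγ

theorem IsPhi.apply_abs {φ : ℝ → ℝ} (hφ : IsPhi φ) (t : ℝ) : φ |t| = φ t := by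
  rcases abs_choice t with ht | ht <;> rw [ht]
  exact hφ.2.2.2.2.1 t

section Weights

variable {Λ : ℤ → ℝ} {φ : ℝ → ℝ} {τ : ℝ} {n : ℕ}

theorem IsExponents.mapsTo_Icc_mul_div (hΛ : IsExponents Λ) (hτ : 0 ≤ τ) (hn : 1 ≤ n) :
    Set.MapsTo (fun j => τ * Λ j / Λ n) (Set.Icc 0 n) (Set.Icc 0 τ) := by
  have hΛn : 0 < Λ n := hΛ.pos (by exact_mod_cast hn)
  rintro j ⟨hj0, hjn⟩
  refine ⟨by have := hΛ.nonneg hj0; positivity, ?_⟩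
  rw [div_le_iff₀ hΛn]
  exact mul_le_mul_of_nonneg_left (hΛ.strictMonoOn.monotoneOn hj0 (hj0.trans hjn) hjn) hτ

theorem IsExponents.monotoneOn_weight (hΛ : IsExponents Λ) (hτ : 0 ≤ τ) (hn : 1 ≤ n)
    (hmono : MonotoneOn φ (Set.Icc 0 τ)) :
    MonotoneOn (fun j => φ (τ * Λ j / Λ n)) (Set.Icc 0 n) := by
  refine hmono.comp (fun i hi j hj hij => ?_) (hΛ.mapsTo_Icc_mul_div hτ hn)
  have hΛn : 0 < Λ n := hΛ.pos (by exact_mod_cast hn)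
  gcongr
  exact hΛ.strictMonoOn.monotoneOn hi.1 hj.1 hij

theorem IsExponents.phi_mul_le_weight (hΛ : IsExponents Λ) (hφ : IsPhi φ) (hτ : 0 ≤ τ)
    (hn : 1 ≤ n) (hmono : MonotoneOn φ (Set.Icc 0 τ)) (hmax : ∀ t, φ t ≤ φ τ)
    {h : ℝ} (hh : |h| ≤ τ / Λ n) (k : ℤ) :
    φ (Λ k * h) ≤ φ (τ * Λ (min n |k|) / Λ n) := by
  have hΛn : 0 < Λ n := hΛ.pos (by exact_mod_cast hn)
  have hΛk : 0 ≤ Λ |k| := hΛ.nonneg (abs_nonneg k)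
  rw [← hφ.apply_abs, abs_mul, hΛ.abs_apply]
  rcases le_total |k| n with hk | hk
  · have hle : Λ |k| * |h| ≤ τ * Λ |k| / Λ n := by
      calc Λ |k| * |h| ≤ Λ |k| * (τ / Λ n) := mul_le_mul_of_nonneg_left hh hΛk
        _ = τ * Λ |k| / Λ n := by ring
    have hmem := hΛ.mapsTo_Icc_mul_div hτ hn ⟨abs_nonneg k, hk⟩
    rw [min_eq_right hk]
    exact hmono ⟨by positivity, hle.trans hmem.2⟩ hmem hle
  · rw [min_eq_left hk, mul_div_assoc, div_self hΛn.ne', mul_one]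
    exact hmax _

end Weights

theorem inverse_theorem_general
    (Λ : ℤ → ℝ) (M : ℤ → ℝ → ℝ) (A : ℤ → ℂ)
    (hΛ : IsExponents Λ)
    (τ : ℝ) (hτ : 0 < τ) (φ : ℝ → ℝ) (hφ : IsPhi φ)
    (hmono : MonotoneOn φ (Set.Icc 0 τ)) (hmax : ∀ t : ℝ, φ t ≤ φ τ)
    (n : ℕ) (hn : 1 ≤ n) :
    genMod Λ M A φ (τ / Λ n)
      ≤ ∑ ν ∈ Finset.Icc 1 n,
          ENNReal.ofReal (φ (τ * Λ ν / Λ n) - φ (τ * Λ ((ν : ℤ) - 1) / Λ n)) *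
            bestE M A ν := by
  set b : ℤ → ℝ := fun j => φ (τ * Λ j / Λ n)
  have hb0 : b 0 = 0 := by simp [b, hΛ.1, hφ.2.2.2.1]
  have hb : MonotoneOn b (Set.Icc 0 n) := hΛ.monotoneOn_weight hτ.le hn hmono
  refine iSup₂_le fun h hh => iSup₂_le fun γ hγ => ?_
  have hpoint : ∀ k, ENNReal.ofReal (γ k * φ (Λ k * h) * ‖A k‖) ≤
      ∑ ν ∈ Icc 1 n, ENNReal.ofReal (b ν - b (ν - 1)) *
        if (ν : ℤ) ≤ |k| then ENNReal.ofReal (γ k * ‖A k‖) else 0 := by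
    intro k
    have hγA : 0 ≤ γ k * ‖A k‖ := by have := hγ.1 k; positivity
    rw [← ofReal_sub_mul_eq_sum_Icc_ite b hb (abs_nonneg k), hb0, sub_zero,
      ← ENNReal.ofReal_mul (hφ.2.2.1 _)]
    refine ENNReal.ofReal_le_ofReal ?_
    calc γ k * φ (Λ k * h) * ‖A k‖ = φ (Λ k * h) * (γ k * ‖A k‖) := by ring
      _ ≤ b (min n |k|) * (γ k * ‖A k‖) :=
        mul_le_mul_of_nonneg_right (hΛ.phi_mul_le_weight hφ hτ.le hn hmono hmax hh k) hγA
  calc ∑' k, ENNReal.ofReal (γ k * φ (Λ k * h) * ‖A k‖)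
      ≤ ∑' k, ∑ ν ∈ Icc 1 n, ENNReal.ofReal (b ν - b (ν - 1)) *
          if (ν : ℤ) ≤ |k| then ENNReal.ofReal (γ k * ‖A k‖) else 0 :=
        ENNReal.tsum_le_tsum hpoint
    _ = ∑ ν ∈ Icc 1 n, ENNReal.ofReal (b ν - b (ν - 1)) *
          ∑' k, if (ν : ℤ) ≤ |k| then ENNReal.ofReal (γ k * ‖A k‖) else 0 := by
        rw [Summable.tsum_finsetSum fun _ _ => ENNReal.summable]
        simp_rw [ENNReal.tsum_mul_left]
    _ ≤ _ := sum_le_sum fun ν _ => mul_le_mul_right (tsum_ite_le_bestE M A hγ ν) _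

/-- **Inverse approximation theorem.** If `φ ∈ Φ` is nondecreasing on `[0,τ]` with
`φ(τ) = max φ`, and `E_N(A) → 0`, then for every `n ∈ ℕ`:
`ω_φ(A, τ/λ_n) ≤ Σ_{ν=1}^n (φ(τλ_ν/λ_n) - φ(τλ_{ν-1}/λ_n)) E_ν(A)`. -/
theorem inverse_theorem
    (Λ : ℤ → ℝ) (M : ℤ → ℝ → ℝ) (A : ℤ → ℂ)
    (hΛ : IsExponents Λ) (hM : ∀ k, IsOrlicz (M k)) (hA : orliczNorm M A ≠ ⊤)
    (τ : ℝ) (hτ : 0 < τ) (φ : ℝ → ℝ) (hφ : IsPhi φ)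
    (hmono : MonotoneOn φ (Set.Icc 0 τ)) (hmax : ∀ t : ℝ, φ t ≤ φ τ)
    (hE : Filter.Tendsto (fun N : ℕ => bestE M A N) Filter.atTop (nhds 0))
    (n : ℕ) (hn : 1 ≤ n) :
    genMod Λ M A φ (τ / Λ n)
      ≤ ∑ ν ∈ Finset.Icc 1 n,
          ENNReal.ofReal (φ (τ * Λ ν / Λ n) - φ (τ * Λ ((ν : ℤ) - 1) / Λ n)) *
            bestE M A ν :=
  inverse_theorem_general Λ M A hΛ τ hτ φ hφ hmono hmax n hn

end
end

section
/- (Improved inverse theorem.) Assume E_N(A) → 0 as N → ∞. Then for every n ∈ ℕ and every α > 0: ω_α(A, π/λ_n) ≤ (π/λ_n)^α · Σ_{ν=1}^{n} (λ_ν^α − λ_{ν−1}^α) · E_ν(A), where λ_0 = 0. -/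
/-!
Since `2 (1 - cos t) ≤ min (|t|, π)²`, for `|h| ≤ π/λ_n` every term satisfies
`φ_α(λ_k h) ≤ (π/λ_n)^α λ_{min(|k|,n)}^α`, and `λ_{min(|k|,n)}^α` telescopes into the increments
`λ_ν^α - λ_{ν-1}^α` over `1 ≤ ν ≤ n` with `ν ≤ |k|`. Exchanging the sums over `k` and `ν`, the tail
`Σ_{|k| ≥ ν} γ_k |A_k|` that multiplies each increment is at most `E_ν(A)` for every `γ ∈ Γ`.
-/

open MeasureTheory Real Filter Finset intervalIntegral
open scoped ENNReal Topology

noncomputable section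

lemma phiAlpha_le_rpow_min {α : ℝ} (hα : 0 ≤ α) (t : ℝ) : phiAlpha α t ≤ min |t| π ^ α := by
  have hcos : 0 ≤ 1 - cos t := by linarith [cos_le_one t]
  have hmin : 0 ≤ min |t| π := le_min (abs_nonneg t) pi_pos.le
  have hsq : 2 * (1 - cos t) ≤ min |t| π ^ 2 := by
    rcases le_total |t| π with ht | ht
    · rw [min_eq_left ht, sq_abs]
      linarith [one_sub_sq_div_two_le_cos (x := t)]
    · rw [min_eq_right ht]
      nlinarith [neg_one_le_cos t, pi_gt_three]
  calc phiAlpha α t = (2 * (1 - cos t)) ^ (α / 2) := by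
        rw [phiAlpha, mul_rpow zero_le_two hcos]
    _ ≤ (min |t| π ^ 2) ^ (α / 2) := by gcongr
    _ = min |t| π ^ α := by
        rw [← rpow_natCast, ← rpow_mul hmin]
        congr 1
        push_cast
        ring

theorem Finset.sum_Icc_sub_pred {G : Type*} [AddCommGroup G] (f : ℤ → G) (m : ℕ) :
    ∑ ν ∈ Icc 1 m, (f ν - f ((ν : ℤ) - 1)) = f m - f 0 := by
  induction m with
  | zero => simp
  | succ m ih =>
    rw [sum_Icc_succ_top (by omega), ih]
    push_cast
    abel_nf

theorem Finset.sum_Icc_filter_le_abs_sub_pred {G : Type*} [AddCommGroup G] (f : ℤ → G)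
    (n : ℕ) (k : ℤ) :
    ∑ ν ∈ Icc 1 n with ((ν : ℕ) : ℤ) ≤ |k|, (f ν - f ((ν : ℤ) - 1))
      = f ((min k.natAbs n : ℕ) : ℤ) - f 0 := by
  rw [← sum_Icc_sub_pred f]
  congr 1
  ext ν
  simp only [mem_filter, mem_Icc, Int.abs_eq_natAbs]
  omega

namespace IsExponents

variable {Λ : ℤ → ℝ}

lemma natCast_pos (hΛ : IsExponents Λ) {k : ℕ} (hk : 1 ≤ k) : 0 < Λ k :=
  hΛ.2.2.1 k (by exact_mod_cast hk)

lemma natCast_nonneg (hΛ : IsExponents Λ) (k : ℕ) : 0 ≤ Λ k := by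
  rcases k.eq_zero_or_pos with rfl | hk
  · simp [hΛ.1]
  · exact (hΛ.natCast_pos hk).le

lemma abs_eq_natAbs (hΛ : IsExponents Λ) (k : ℤ) : |Λ k| = Λ k.natAbs := by
  rcases Int.natAbs_eq k with hk | hk
  · rw [hk, Int.natAbs_natCast, abs_of_nonneg (hΛ.natCast_nonneg _)]
  · rw [hk, hΛ.2.1, abs_neg, Int.natAbs_neg, Int.natAbs_natCast,
      abs_of_nonneg (hΛ.natCast_nonneg _)]

lemma min_abs_mul_le (hΛ : IsExponents Λ) {n : ℕ} (hn : 0 < Λ n) {h : ℝ}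
    (hh : |h| ≤ π / Λ n) (k : ℤ) :
    min |Λ k * h| π ≤ π / Λ n * Λ ((min k.natAbs n : ℕ) : ℤ) := by
  rcases le_total k.natAbs n with hkn | hkn
  · rw [Nat.min_eq_left hkn]
    calc min |Λ k * h| π ≤ Λ k.natAbs * |h| := by
          rw [← hΛ.abs_eq_natAbs, ← abs_mul]
          exact min_le_left _ _
      _ ≤ Λ k.natAbs * (π / Λ n) := by gcongr; exact hΛ.natCast_nonneg _
      _ = π / Λ n * Λ k.natAbs := mul_comm _ _
  · rw [Nat.min_eq_right hkn, div_mul_cancel₀ π hn.ne']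
    exact min_le_right _ _

lemma ofReal_phiAlpha_mul_le_sum (hΛ : IsExponents Λ) {α : ℝ} (hα : 0 < α) {n : ℕ}
    (hn : 0 < Λ n) {h : ℝ} (hh : |h| ≤ π / Λ n) (k : ℤ) (a : ℝ≥0∞) :
    ENNReal.ofReal (phiAlpha α (Λ k * h)) * a ≤ ENNReal.ofReal ((π / Λ n) ^ α) *
      ∑ ν ∈ Icc 1 n, ENNReal.ofReal (Λ ν ^ α - Λ ((ν : ℤ) - 1) ^ α) *
        if (ν : ℤ) ≤ |k| then a else 0 := by
  have hc : 0 ≤ π / Λ n := (div_pos pi_pos hn).le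
  have hphi : phiAlpha α (Λ k * h) ≤ (π / Λ n) ^ α * Λ ((min k.natAbs n : ℕ) : ℤ) ^ α := by
    rw [← mul_rpow hc (hΛ.natCast_nonneg _)]
    exact (phiAlpha_le_rpow_min hα.le _).trans
      (rpow_le_rpow (le_min (abs_nonneg _) pi_pos.le) (hΛ.min_abs_mul_le hn hh k) hα.le)
  have hsum : Λ ((min k.natAbs n : ℕ) : ℤ) ^ α
      = ∑ ν ∈ Icc 1 n with ((ν : ℕ) : ℤ) ≤ |k|, (Λ ν ^ α - Λ ((ν : ℤ) - 1) ^ α) := by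
    rw [sum_Icc_filter_le_abs_sub_pred (fun j => Λ j ^ α), hΛ.1, zero_rpow hα.ne', sub_zero]
  calc ENNReal.ofReal (phiAlpha α (Λ k * h)) * a
      ≤ ENNReal.ofReal ((π / Λ n) ^ α) * ENNReal.ofReal (Λ ((min k.natAbs n : ℕ) : ℤ) ^ α) *
          a := by
        rw [← ENNReal.ofReal_mul (rpow_nonneg hc α)]
        gcongr
    _ ≤ ENNReal.ofReal ((π / Λ n) ^ α) *
          (∑ ν ∈ Icc 1 n with ((ν : ℕ) : ℤ) ≤ |k|,
            ENNReal.ofReal (Λ ν ^ α - Λ ((ν : ℤ) - 1) ^ α)) * a := by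
        rw [hsum]
        gcongr
        exact le_sum_of_subadditive ENNReal.ofReal ENNReal.ofReal_zero.le
          (fun _ _ => ENNReal.ofReal_add_le) _ _
    _ = _ := by
        rw [mul_assoc, sum_mul, sum_filter]
        simp only [mul_ite, mul_zero]

end IsExponents

theorem inverse_theorem_improved_general
    (Λ : ℤ → ℝ) (M : ℤ → ℝ → ℝ) (A : ℤ → ℂ)
    (hΛ : IsExponents Λ)
    (n : ℕ) (hn : 1 ≤ n) (α : ℝ) (hα : 0 < α) :
    genMod Λ M A (phiAlpha α) (π / Λ n)
      ≤ ENNReal.ofReal ((π / Λ n) ^ α) *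
          ∑ ν ∈ Finset.Icc 1 n,
            ENNReal.ofReal (Λ ν ^ α - Λ ((ν : ℤ) - 1) ^ α) * bestE M A ν := by
  have hΛn : 0 < Λ n := hΛ.natCast_pos hn
  refine iSup₂_le fun h hh => iSup₂_le fun γ hγ => ?_
  have hterm (k : ℤ) : ENNReal.ofReal (γ k * phiAlpha α (Λ k * h) * ‖A k‖)
      = ENNReal.ofReal (phiAlpha α (Λ k * h)) * ENNReal.ofReal (γ k * ‖A k‖) := by
    rw [← ENNReal.ofReal_mul' (mul_nonneg (hγ.1 k).le (norm_nonneg _))]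
    ring_nf
  calc ∑' k, ENNReal.ofReal (γ k * phiAlpha α (Λ k * h) * ‖A k‖)
      ≤ ∑' k, ENNReal.ofReal ((π / Λ n) ^ α) * ∑ ν ∈ Icc 1 n,
          ENNReal.ofReal (Λ ν ^ α - Λ ((ν : ℤ) - 1) ^ α) *
            if (ν : ℤ) ≤ |k| then ENNReal.ofReal (γ k * ‖A k‖) else 0 :=
        ENNReal.tsum_le_tsum fun k =>
          (hterm k).trans_le (hΛ.ofReal_phiAlpha_mul_le_sum hα hΛn hh k _)
    _ = ENNReal.ofReal ((π / Λ n) ^ α) * ∑ ν ∈ Icc 1 n,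
          ENNReal.ofReal (Λ ν ^ α - Λ ((ν : ℤ) - 1) ^ α) *
            ∑' k, if (ν : ℤ) ≤ |k| then ENNReal.ofReal (γ k * ‖A k‖) else 0 := by
        simp only [ENNReal.tsum_mul_left, Summable.tsum_finsetSum fun _ _ => ENNReal.summable]
    _ ≤ _ := by
        gcongr with ν
        exact le_iSup₂_of_le γ hγ le_rfl

/-- **Improved inverse theorem.** If `E_N(A) → 0`, then for every `n ∈ ℕ` and `α > 0`:
`ω_α(A, π/λ_n) ≤ (π/λ_n)^α Σ_{ν=1}^n (λ_ν^α - λ_{ν-1}^α) E_ν(A)`. -/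
theorem inverse_theorem_improved
    (Λ : ℤ → ℝ) (M : ℤ → ℝ → ℝ) (A : ℤ → ℂ)
    (hΛ : IsExponents Λ) (hM : ∀ k, IsOrlicz (M k)) (hA : orliczNorm M A ≠ ⊤)
    (hE : Filter.Tendsto (fun N : ℕ => bestE M A N) Filter.atTop (nhds 0))
    (n : ℕ) (hn : 1 ≤ n) (α : ℝ) (hα : 0 < α) :
    genMod Λ M A (phiAlpha α) (π / Λ n)
      ≤ ENNReal.ofReal ((π / Λ n) ^ α) *
          ∑ ν ∈ Finset.Icc 1 n,
            ENNReal.ofReal (Λ ν ^ α - Λ ((ν : ℤ) - 1) ^ α) * bestE M A ν :=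
  inverse_theorem_improved_general Λ M A hΛ n hn α hα
end
end
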